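/- arXiv:2112.06641 — 7 statements merged into one kernel-verified Lean document; each statement's English description precedes it below -/
import Mathlib

section
/- β-function packing lemma: For every finite list l of natural numbers, there exist natural numbers N and b such that for every index i with i < l.length, the i-th entry of l equals N % ((i+1)·b + 1). -/
theorem beta_packing (l : List ℕ) :
    ∃ N b : ℕ, ∀ (i : ℕ) (hi : i < l.length),
      l.get ⟨i, hi⟩ = N % ((i + 1) * b + 1) := by
  refine ⟨(Nat.unbeta l).unpair.1, (Nat.unbeta l).unpair.2, fun i hi => ?_⟩
  have := Nat.beta_unbeta_coe l ⟨i, hi⟩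
  simpa [Nat.beta] using this.symm
end

section
/- Correctness of the arithmetical definition of exponentiation: For all natural numbers x, n, y, one has y = x^n if and only if either (n = 0 and y = 1), or (1 ≤ n and there exist natural numbers N and b such that: every natural number i with 1 ≤ i < n divides b; N % (b+1) = x; N % (n·b+1) = y; and for every i < n - 1, N % ((i+2)·b + 1) = x · (N % ((i+1)·b + 1))). -/
/-!
The moduli `(i + 1) * b + 1`, `i < n`, are pairwise coprime as soon as `1, …, n - 1` divide `b`
(a common prime factor would divide their difference `(j - i) * b`, hence `b`, hence `1`).
Taking `b = n! * xⁿ`, which also exceeds every `x^(i+1)` with `i < n`, the Chinese remainder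
theorem packs `x, x², …, xⁿ` into one number `N`. Conversely, the recurrence on the remainders
forces `N % ((i + 1) * b + 1) = x^(i+1)` by induction on `i`.
-/

namespace PowArith

open Nat Function

theorem pairwise_coprime_moduli {n b : ℕ} (hdvd : ∀ i, 1 ≤ i → i < n → i ∣ b) :
    (List.range n).Pairwise (Coprime on fun i => (i + 1) * b + 1) := by
  refine List.pairwise_lt_range.imp_of_mem fun {i j} _ hj hij => coprime_mul_succ ?_
  exact hdvd _ (by omega) (by have := List.mem_range.mp hj; omega)

theorem exists_forall_mod_moduli_eq {n b : ℕ} (f : ℕ → ℕ)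
    (hdvd : ∀ i, 1 ≤ i → i < n → i ∣ b) (hf : ∀ i < n, f i ≤ b) :
    ∃ N, ∀ i < n, N % ((i + 1) * b + 1) = f i := by
  obtain ⟨N, hN⟩ := chineseRemainderOfList f _ _ (pairwise_coprime_moduli hdvd)
  refine ⟨N, fun i hi => Eq.trans (hN i (List.mem_range.mpr hi)) (mod_eq_of_lt ?_)⟩
  calc f i ≤ b := hf i hi
    _ ≤ (i + 1) * b := Nat.le_mul_of_pos_left b i.succ_pos
    _ < (i + 1) * b + 1 := lt_add_one _

theorem pow_succ_le_factorial_mul_pow (x : ℕ) {n i : ℕ} (hi : i < n) :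
    x ^ (i + 1) ≤ n ! * x ^ n := by
  rcases Nat.eq_zero_or_pos x with rfl | hx
  · simp
  · calc x ^ (i + 1) ≤ x ^ n := Nat.pow_le_pow_right hx hi
      _ ≤ n ! * x ^ n := Nat.le_mul_of_pos_left _ n.factorial_pos

theorem dvd_factorial_mul_pow (x : ℕ) {n i : ℕ} (hi : 1 ≤ i) (hin : i < n) :
    i ∣ n ! * x ^ n :=
  (Nat.dvd_factorial hi hin.le).mul_right _

theorem exists_forall_mod_moduli_eq_pow (x n : ℕ) :
    ∃ N, ∀ i < n, N % ((i + 1) * (n ! * x ^ n) + 1) = x ^ (i + 1) :=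
  exists_forall_mod_moduli_eq _
    (fun _ => dvd_factorial_mul_pow x) (fun _ => pow_succ_le_factorial_mul_pow x)

theorem mod_moduli_eq_pow_of_recurrence {N b x m : ℕ} (h₀ : N % (b + 1) = x)
    (hrec : ∀ i < m, N % ((i + 2) * b + 1) = x * (N % ((i + 1) * b + 1))) :
    ∀ i ≤ m, N % ((i + 1) * b + 1) = x ^ (i + 1)
  | 0, _ => by simpa using h₀
  | i + 1, hi => by
    rw [hrec i hi, mod_moduli_eq_pow_of_recurrence h₀ hrec i (by omega), pow_succ' x (i + 1)]

end PowArith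

theorem pow_arith_correct (x n y : ℕ) :
    y = x ^ n ↔
      (n = 0 ∧ y = 1) ∨
      (1 ≤ n ∧ ∃ N b : ℕ,
        (∀ i : ℕ, 1 ≤ i → i < n → i ∣ b) ∧
        N % (b + 1) = x ∧
        N % (n * b + 1) = y ∧
        ∀ i : ℕ, i < n - 1 →
          N % ((i + 2) * b + 1) = x * (N % ((i + 1) * b + 1))) := by
  constructor
  · rintro rfl
    rcases Nat.eq_zero_or_pos n with rfl | hn
    · exact Or.inl ⟨rfl, pow_zero x⟩
    obtain ⟨N, hN⟩ := PowArith.exists_forall_mod_moduli_eq_pow x n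
    refine Or.inr ⟨hn, N, n.factorial * x ^ n, fun _ => PowArith.dvd_factorial_mul_pow x, ?_, ?_,
      fun i hi => ?_⟩
    · simpa using hN 0 hn
    · simpa [Nat.sub_add_cancel hn] using hN (n - 1) (by omega)
    · rw [hN i (by omega), hN (i + 1) (by omega), pow_succ' x (i + 1)]
  · rintro (⟨rfl, rfl⟩ | ⟨hn, N, b, -, h₀, hlast, hrec⟩)
    · exact (pow_zero x).symm
    · obtain ⟨m, rfl⟩ := Nat.exists_eq_add_of_le' hn
      simpa [hlast] using PowArith.mod_moduli_eq_pow_of_recurrence h₀ hrec m le_rfl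
end

section
/- Correctness of the β-function representation of primitive recursion: Let h : ℕ → ℕ and g : ℕ → ℕ → ℕ → ℕ, and let f : ℕ → ℕ → ℕ be defined by the recursion f x 0 = h x and f x (n+1) = g x n (f x n). Then for all natural numbers x, n, y: f x n = y if and only if there exist natural numbers N and b such that N % (b+1) = h x, for every i < n one has N % ((i+2)·b + 1) = g x i (N % ((i+1)·b + 1)), and N % ((n+1)·b + 1) = y. -/
/-!
Gödel's β-function lemma (`Nat.beta_unbeta_coe`) lets a single pair `(N, b)` encode the finitely
many values `f x 0, …, f x n` as the remainders of `N` modulo `(i + 1) * b + 1`; conversely, any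
encoding satisfying the recursion clauses agrees with `f x` by induction, since a recursion
determines its solution from the initial value.
-/

theorem Nat.exists_mod_succ_mul_add_one_eq (a : ℕ → ℕ) (n : ℕ) :
    ∃ N b : ℕ, ∀ i ≤ n, N % ((i + 1) * b + 1) = a i := by
  let l := (List.range (n + 1)).map a
  refine ⟨(Nat.unbeta l).unpair.1, (Nat.unbeta l).unpair.2, fun i hi => ?_⟩
  have hil : i < l.length := by simp only [l, List.length_map, List.length_range]; omega
  simpa only [Nat.beta, l, Fin.getElem_fin, List.getElem_map, List.getElem_range] using
    Nat.beta_unbeta_coe l ⟨i, hil⟩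

theorem eq_of_recursion_of_le {α : Type*} {u v : ℕ → α} (G : ℕ → α → α) {n : ℕ}
    (h0 : u 0 = v 0) (hu : ∀ i < n, u (i + 1) = G i (u i))
    (hv : ∀ i < n, v (i + 1) = G i (v i)) : ∀ i ≤ n, u i = v i := by
  intro i hi
  induction i with
  | zero => exact h0
  | succ i ih => rw [hu i hi, hv i hi, ih (by omega)]

theorem primrec_beta_correct (h : ℕ → ℕ) (g : ℕ → ℕ → ℕ → ℕ) (f : ℕ → ℕ → ℕ)
    (hf0 : ∀ x, f x 0 = h x)
    (hfs : ∀ x n, f x (n + 1) = g x n (f x n)) :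
    ∀ x n y : ℕ, f x n = y ↔
      ∃ N b : ℕ,
        N % (b + 1) = h x ∧
        (∀ i : ℕ, i < n →
          N % ((i + 2) * b + 1) = g x i (N % ((i + 1) * b + 1))) ∧
        N % ((n + 1) * b + 1) = y := by
  intro x n y
  constructor
  · rintro rfl
    obtain ⟨N, b, hN⟩ := Nat.exists_mod_succ_mul_add_one_eq (f x) n
    refine ⟨N, b, by simpa [hf0] using hN 0 n.zero_le, fun i hi => ?_, hN n le_rfl⟩
    rw [hN i hi.le, ← hfs]
    exact hN (i + 1) hi
  · rintro ⟨N, b, h0, hstep, rfl⟩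
    exact eq_of_recursion_of_le (v := fun i => N % ((i + 1) * b + 1)) (g x)
      (by simpa [hf0] using h0.symm)
      (fun i _ => hfs x i) hstep n le_rfl
end

section
/- Two-sentence liar's paradox incompleteness theorem: Let L be a first-order language, T an L-theory, and Pr : L.Sentence → L.Sentence a function such that (D1) for every sentence φ, if T ⊨ φ then T ⊨ Pr φ, and (Dneg) for every sentence φ, if T ⊨ ∼φ then T ⊨ ∼(Pr φ). Suppose σ and τ are L-sentences with T ⊨ (σ ⇔ Pr τ) and T ⊨ (τ ⇔ ∼(Pr σ)), and suppose T is satisfiable. Then none of σ, ∼σ, τ, ∼τ is a consequence of T; that is, ¬(T ⊨ σ), ¬(T ⊨ ∼σ), ¬(T ⊨ τ) and ¬(T ⊨ ∼τ). -/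
open FirstOrder FirstOrder.Language

theorem two_sentence_liar_incompleteness {L : Language} (T : L.Theory)
    (Pr : L.Sentence → L.Sentence)
    (hD1 : ∀ φ : L.Sentence, T ⊨ᵇ φ → T ⊨ᵇ Pr φ)
    (hDneg : ∀ φ : L.Sentence, T ⊨ᵇ ∼φ → T ⊨ᵇ ∼(Pr φ))
    (σ τ : L.Sentence)
    (hσ : T ⊨ᵇ (σ ⇔ Pr τ))
    (hτ : T ⊨ᵇ (τ ⇔ ∼(Pr σ)))
    (hsat : T.IsSatisfiable) :
    ¬(T ⊨ᵇ σ) ∧ ¬(T ⊨ᵇ ∼σ) ∧ ¬(T ⊨ᵇ τ) ∧ ¬(T ⊨ᵇ ∼τ) := by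
  obtain ⟨M⟩ := hsat
  -- transfer iffs through models
  have hiffσ : ∀ N : T.ModelType, (N ⊨ σ ↔ N ⊨ Pr τ) := fun N => by
    have := (Theory.models_sentence_iff.1 hσ) N
    simpa [Sentence.Realize] using this
  have hiffτ : ∀ N : T.ModelType, (N ⊨ τ ↔ ¬ N ⊨ Pr σ) := fun N => by
    have := (Theory.models_sentence_iff.1 hτ) N
    simpa [Sentence.Realize] using this
  -- From T ⊨ τ we get a contradiction
  have notτ : ¬(T ⊨ᵇ τ) := by
    intro ht
    have hPrτ := hD1 τ ht
    have hTσ : T ⊨ᵇ σ := Theory.models_sentence_iff.2 fun N =>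
      (hiffσ N).2 (Theory.models_sentence_iff.1 hPrτ N)
    have hPrσ := hD1 σ hTσ
    exact (hiffτ M).1 (Theory.models_sentence_iff.1 ht M)
      (Theory.models_sentence_iff.1 hPrσ M)
  -- From T ⊨ ∼τ we get a contradiction
  have notnτ : ¬(T ⊨ᵇ ∼τ) := by
    intro ht
    have hnPrτ := hDneg τ ht
    have hTnσ : T ⊨ᵇ ∼σ := Theory.models_sentence_iff.2 fun N => by
      have h1 : ¬ N ⊨ Pr τ := by
        simpa [Sentence.Realize] using Theory.models_sentence_iff.1 hnPrτ N
      have : ¬ N ⊨ σ := fun hs => h1 ((hiffσ N).1 hs)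
      simpa [Sentence.Realize] using this
    have hnPrσ := hDneg σ hTnσ
    have hMτ : M ⊨ τ := (hiffτ M).2 (by
      simpa [Sentence.Realize] using Theory.models_sentence_iff.1 hnPrσ M)
    have : ¬ M ⊨ τ := by
      simpa [Sentence.Realize] using Theory.models_sentence_iff.1 ht M
    exact this hMτ
  refine ⟨?_, ?_, notτ, notnτ⟩
  · intro hs
    have hPrσ := hD1 σ hs
    have : T ⊨ᵇ ∼τ := Theory.models_sentence_iff.2 fun N => by
      have : ¬ N ⊨ τ := fun ht =>
        (hiffτ N).1 ht (Theory.models_sentence_iff.1 hPrσ N)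
      simpa [Sentence.Realize] using this
    exact notnτ this
  · intro hs
    have hnPrσ := hDneg σ hs
    have : T ⊨ᵇ τ := Theory.models_sentence_iff.2 fun N =>
      (hiffτ N).2 (by
        simpa [Sentence.Realize] using Theory.models_sentence_iff.1 hnPrσ N)
    exact notτ this
end

section
/- Key step (*) of the Second Incompleteness Theorem: Let L be a first-order language, T an L-theory, and Pr : L.Sentence → L.Sentence satisfying the Hilbert–Bernays conditions: (i) for every sentence φ, if T ⊨ φ then T ⊨ Pr φ; (ii) for every sentence φ, T ⊨ (Pr φ ⟹ Pr (Pr φ)); (iii) for all sentences φ, ψ, T ⊨ ((Pr φ ⊓ Pr (φ ⟹ ψ)) ⟹ Pr ψ). Suppose σ is a sentence with T ⊨ (σ ⇔ ∼(Pr σ)). Then T ⊨ (Pr σ ⟹ Pr (∼σ)). -/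
open FirstOrder FirstOrder.Language

theorem second_incompleteness_key_step {L : Language} (T : L.Theory)
    (Pr : L.Sentence → L.Sentence)
    (hHB1 : ∀ φ : L.Sentence, T ⊨ᵇ φ → T ⊨ᵇ Pr φ)
    (hHB2 : ∀ φ : L.Sentence, T ⊨ᵇ (Pr φ ⟹ Pr (Pr φ)))
    (hHB3 : ∀ φ ψ : L.Sentence, T ⊨ᵇ ((Pr φ ⊓ Pr (φ ⟹ ψ)) ⟹ Pr ψ))
    (σ : L.Sentence) (hσ : T ⊨ᵇ (σ ⇔ ∼(Pr σ))) :
    T ⊨ᵇ (Pr σ ⟹ Pr (∼σ)) := by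
  have h1 : T ⊨ᵇ (Pr σ ⟹ ∼σ) := by
    rw [Theory.models_sentence_iff] at hσ ⊢
    intro M
    have := hσ M
    simp only [Sentence.Realize, Formula.Realize, BoundedFormula.realize_iff,
      BoundedFormula.realize_imp, BoundedFormula.realize_not] at this ⊢
    tauto
  have h2 : T ⊨ᵇ Pr (Pr σ ⟹ ∼σ) := hHB1 _ h1
  have h3 := hHB3 (Pr σ) (∼σ)
  have h4 := hHB2 σ
  rw [Theory.models_sentence_iff] at h2 h3 h4 ⊢
  intro M
  have c2 := h2 M
  have c3 := h3 M
  have c4 := h4 M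
  simp only [Sentence.Realize, Formula.Realize, BoundedFormula.realize_imp,
    BoundedFormula.realize_inf] at c2 c3 c4 ⊢
  exact fun h => c3 ⟨c4 h, c2⟩
end

section
/- Abstract Second Incompleteness Theorem: Let L be a first-order language, T a satisfiable L-theory, and Pr : L.Sentence → L.Sentence satisfying: (i) for every sentence φ, if T ⊨ φ then T ⊨ Pr φ; (ii) for every sentence φ, T ⊨ (Pr φ ⟹ Pr (Pr φ)); (iii) for all sentences φ, ψ, T ⊨ ((Pr φ ⊓ Pr (φ ⟹ ψ)) ⟹ Pr ψ); and (conj) for all sentences φ, ψ, T ⊨ ((Pr φ ⊓ Pr ψ) ⟹ Pr (φ ⊓ ψ)). Suppose σ is a sentence with T ⊨ (σ ⇔ ∼(Pr σ)). Then T does not model the consistency statement: ¬(T ⊨ ∼(Pr ⊥)), where ⊥ denotes the false sentence. -/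
open FirstOrder FirstOrder.Language

theorem second_incompleteness {L : Language} (T : L.Theory)
    (hsat : T.IsSatisfiable)
    (Pr : L.Sentence → L.Sentence)
    (hHB1 : ∀ φ : L.Sentence, T ⊨ᵇ φ → T ⊨ᵇ Pr φ)
    (hHB2 : ∀ φ : L.Sentence, T ⊨ᵇ (Pr φ ⟹ Pr (Pr φ)))
    (hHB3 : ∀ φ ψ : L.Sentence, T ⊨ᵇ ((Pr φ ⊓ Pr (φ ⟹ ψ)) ⟹ Pr ψ))
    (hconj : ∀ φ ψ : L.Sentence, T ⊨ᵇ ((Pr φ ⊓ Pr ψ) ⟹ Pr (φ ⊓ ψ)))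
    (σ : L.Sentence) (hσ : T ⊨ᵇ (σ ⇔ ∼(Pr σ))) :
    ¬(T ⊨ᵇ ∼(Pr (⊥ : L.Sentence))) := by
  intro hcon
  -- Step 1: T ⊨ (σ ⊓ Pr σ) ⟹ ⊥
  have step1 : T ⊨ᵇ ((σ ⊓ Pr σ) ⟹ (⊥ : L.Sentence)) := by
    intro M v xs
    have h := hσ M v xs
    simp only [BoundedFormula.realize_iff, BoundedFormula.realize_not,
      BoundedFormula.realize_imp, BoundedFormula.realize_inf,
      BoundedFormula.realize_bot] at *
    tauto
  have step2 := hHB1 _ step1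
  -- Step 3: T ⊨ σ
  have step3 : T ⊨ᵇ σ := by
    intro M v xs
    have h1 := hσ M v xs
    have h2 := hcon M v xs
    have h3 := hHB2 σ M v xs
    have h4 := hconj σ (Pr σ) M v xs
    have h5 := step2 M v xs
    have h6 := hHB3 (σ ⊓ Pr σ) ⊥ M v xs
    simp only [BoundedFormula.realize_iff, BoundedFormula.realize_not,
      BoundedFormula.realize_imp, BoundedFormula.realize_inf,
      BoundedFormula.realize_bot] at *
    tauto
  have step4 := hHB1 σ step3
  obtain ⟨M⟩ := hsat
  have h1 := hσ M default default
  have h2 := step3 M default default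
  have h3 := step4 M default default
  simp only [BoundedFormula.realize_iff, BoundedFormula.realize_not] at *
  tauto
end

section
/- Unsolvability of the Consistent Guessing Problem: There is no computable total function f from Turing machine codes to Booleans such that for every code c: if c, run on input 0, halts with output 1, then f c = true; and if c, run on input 0, halts with output 0, then f c = false. -/
theorem consistent_guessing_unsolvable :
    ¬ ∃ f : Nat.Partrec.Code → Bool, Computable f ∧
      (∀ c : Nat.Partrec.Code, 1 ∈ c.eval 0 → f c = true) ∧
      (∀ c : Nat.Partrec.Code, 0 ∈ c.eval 0 → f c = false) := by
  rintro ⟨f, hf, h1, h0⟩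
  -- diagonal function: output 0 if f c = true, else 1
  have hF : Computable₂ (fun c (_ : ℕ) => if f c then 0 else 1) :=
    Computable.cond (hf.comp Computable.fst) (Computable.const 0) (Computable.const 1) |>.of_eq (by intro p; cases h : f p.1 <;> simp [h])
  have hP : Partrec₂ (fun c => (fun _ : ℕ => ((if f c then 0 else 1 : ℕ) : Part ℕ))) :=
    hF.partrec₂
  obtain ⟨c, hc⟩ := Nat.Partrec.Code.fixed_point₂ hP
  cases hfc : f c with
  | true =>
      have : (0 : ℕ) ∈ c.eval 0 := by simp [hc, hfc]
      have := h0 c this; simp [hfc] at this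
  | false =>
      have : (1 : ℕ) ∈ c.eval 0 := by simp [hc, hfc]
      have := h1 c this; simp [hfc] at this
end
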